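/- Let γ ∈ (0,1), let A be the 4×4 real matrix with rows (0,0,1,0), (0,0,0,1), (γ,1−γ,0,0), (1−γ,γ,0,0), and let K̄ be the 8×8 block-diagonal matrix diag(A, A). Let s̄(0) ∈ ℝ⁸ be the vector (1/4)(1,0,1,0,1,0,1,0)ᵀ and set s̄(t) = K̄ᵗ s̄(0). Then for every t ≥ 1 and every index i ∈ {1,…,8}, | s̄(t)_i − 1/8 | ≤ (1/8) |1−2γ|^{(t−1)/2}, where the power is the real power |1−2γ|^{(t−1)/2} with nonnegative base |1−2γ| < 1. -/
import Mathlib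


/-- The 4×4 matrix `A` of the averaged mirror dynamics. -/
noncomputable def Amat (γ : ℝ) : Matrix (Fin 4) (Fin 4) ℝ :=
  !![0, 0, 1, 0;
     0, 0, 0, 1;
     γ, 1 - γ, 0, 0;
     1 - γ, γ, 0, 0]

/-- The 8×8 block-diagonal matrix `K̄ = diag(A, A)`. -/
noncomputable def Kbar (γ : ℝ) : Matrix (Fin 4 ⊕ Fin 4) (Fin 4 ⊕ Fin 4) ℝ :=
  Matrix.fromBlocks (Amat γ) 0 0 (Amat γ)

/-- The initial vector `s̄(0) = (1/4)(1,0,1,0,1,0,1,0)ᵀ`. -/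
noncomputable def sbar0 : Fin 4 ⊕ Fin 4 → ℝ :=
  Sum.elim ![1 / 4, 0, 1 / 4, 0] ![1 / 4, 0, 1 / 4, 0]

/-- closed form for the 4-dim dynamics -/
noncomputable def vvec (γ : ℝ) (t : ℕ) : Fin 4 → ℝ :=
  ![(1 + (2*γ-1)^(t/2))/8, (1 - (2*γ-1)^(t/2))/8,
    (1 + (2*γ-1)^((t+1)/2))/8, (1 - (2*γ-1)^((t+1)/2))/8]

lemma Amat_mulVec_vvec (γ : ℝ) (t : ℕ) :
    (Amat γ).mulVec (vvec γ t) = vvec γ (t+1) := by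
  have h1 : (t+2)/2 = t/2 + 1 := by omega
  funext j
  fin_cases j <;>
    simp [Amat, vvec, Matrix.mulVec, dotProduct, Fin.sum_univ_four, h1, pow_succ] <;>
    ring

lemma Apow_mulVec (γ : ℝ) (t : ℕ) :
    (Amat γ ^ t).mulVec ![1/4, 0, 1/4, 0] = vvec γ t := by
  induction t with
  | zero =>
      funext j
      fin_cases j <;> simp [vvec] <;> norm_num
  | succ t ih =>
      rw [pow_succ', ← Matrix.mulVec_mulVec, ih, Amat_mulVec_vvec]

lemma Kbar_pow (γ : ℝ) (t : ℕ) :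
    Kbar γ ^ t = Matrix.fromBlocks (Amat γ ^ t) 0 0 (Amat γ ^ t) := by
  induction t with
  | zero => simp [Matrix.fromBlocks_one]
  | succ t ih =>
      rw [pow_succ, pow_succ, ih, Kbar, Matrix.fromBlocks_multiply]
      simp

lemma pow_le_rpow_aux {x : ℝ} (hx0 : 0 ≤ x) (hx1 : x ≤ 1) {e : ℕ} {y : ℝ}
    (hy : 0 ≤ y) (h : y ≤ e) : x ^ e ≤ x ^ y := by
  rcases hx0.lt_or_eq with h0 | h0
  · rw [← Real.rpow_natCast]
    exact Real.rpow_le_rpow_of_exponent_ge h0 hx1 h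
  · by_cases hy0 : y = 0
    · subst hy0
      rw [Real.rpow_zero]
      exact pow_le_one₀ hx0 hx1
    · have he : e ≠ 0 := by
        intro he0
        apply hy0
        have : (e : ℝ) = 0 := by exact_mod_cast congrArg Nat.cast he0
        linarith [h, hy]
      rw [← h0, Real.zero_rpow hy0, zero_pow he]

lemma key_bound (γ : ℝ) (hγ : γ ∈ Set.Ioo (0 : ℝ) 1) (t e : ℕ) (ht : 1 ≤ t)
    (he : t - 1 ≤ 2 * e) :
    |2*γ-1| ^ e ≤ |1 - 2 * γ| ^ (((t : ℝ) - 1) / 2) := by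
  have habs : |2*γ-1| = |1-2*γ| := by rw [abs_sub_comm]
  rw [habs]
  obtain ⟨h0, h1⟩ := hγ
  have hx0 : (0:ℝ) ≤ |1-2*γ| := abs_nonneg _
  have hx1 : |1-2*γ| ≤ 1 := by rw [abs_le]; constructor <;> linarith
  have hy : (0:ℝ) ≤ ((t:ℝ)-1)/2 := by
    have : (1:ℝ) ≤ t := by exact_mod_cast ht
    linarith
  have hye : ((t:ℝ)-1)/2 ≤ e := by
    have : (t:ℝ) - 1 ≤ 2 * e := by
      have h' : (t - 1 : ℕ) ≤ 2 * e := he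
      have := (Nat.cast_le (α := ℝ)).2 h'
      push_cast at this
      have ht' : (1:ℝ) ≤ t := by exact_mod_cast ht
      rw [Nat.cast_sub ht] at this
      push_cast at this
      linarith
    linarith
  exact pow_le_rpow_aux hx0 hx1 hy hye

lemma comp_bound {x R : ℝ} (h : |x| ≤ R) : |(1+x)/8 - 1/8| ≤ (1/8)*R := by
  have e : (1+x)/8 - 1/8 = x/8 := by ring
  rw [e, abs_div, abs_of_pos (by norm_num : (0:ℝ) < 8)]
  linarith

lemma comp_bound' {x R : ℝ} (h : |x| ≤ R) : |(1-x)/8 - 1/8| ≤ (1/8)*R := by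
  have e : (1-x)/8 - 1/8 = (-x)/8 := by ring
  rw [e, abs_div, abs_neg, abs_of_pos (by norm_num : (0:ℝ) < 8)]
  linarith


/-- for `γ ∈ (0,1)`, `s̄(t) = K̄ᵗ s̄(0)` satisfies, for every
`t ≥ 1` and every component `i`, `|s̄(t)ᵢ - 1/8| ≤ (1/8)|1-2γ|^{(t-1)/2}`. -/
theorem sbar_convergence (γ : ℝ) (hγ : γ ∈ Set.Ioo (0 : ℝ) 1)
    (t : ℕ) (ht : 1 ≤ t) (i : Fin 4 ⊕ Fin 4) :
    |((Kbar γ ^ t).mulVec sbar0) i - 1 / 8| ≤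
      (1 / 8) * |1 - 2 * γ| ^ (((t : ℝ) - 1) / 2) := by
  have h1 : t - 1 ≤ 2 * (t / 2) := by omega
  have h2 : t - 1 ≤ 2 * ((t + 1) / 2) := by omega
  have key1 : |(2*γ-1) ^ (t/2)| ≤ |1 - 2 * γ| ^ (((t : ℝ) - 1) / 2) := by
    rw [abs_pow]; exact key_bound γ hγ t (t/2) ht h1
  have key2 : |(2*γ-1) ^ ((t+1)/2)| ≤ |1 - 2 * γ| ^ (((t : ℝ) - 1) / 2) := by
    rw [abs_pow]; exact key_bound γ hγ t ((t+1)/2) ht h2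
  have hdev : ∀ j : Fin 4, |vvec γ t j - 1/8| ≤
      (1 / 8) * |1 - 2 * γ| ^ (((t : ℝ) - 1) / 2) := by
    intro j
    fin_cases j
    · exact comp_bound key1
    · exact comp_bound' key1
    · exact comp_bound key2
    · exact comp_bound' key2
  rw [Kbar_pow, sbar0, Matrix.fromBlocks_mulVec]
  simp only [Matrix.zero_mulVec, add_zero, zero_add, Sum.elim_comp_inl,
    Sum.elim_comp_inr, Apow_mulVec]
  cases i with
  | inl j => simpa using hdev j
  | inr j => simpa using hdev j
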